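/- arXiv:0707.3122 — 2 statements merged into one kernel-verified Lean document; each statement's English description precedes it below -/
import Mathlib

section
/- If Ω is a bounded domain in ℂ (or ℂ^n) and M₁, M₂ are closed subspaces of the Bergman space L²_a(Ω) invariant under multiplication by the coordinate functions, and there exists a unitary V : M₁ → M₂ commuting with these multiplications, then M₁ = M₂. -/
/-!
If `V` commutes with multiplication by the coordinates, it commutes with multiplication by every
monomial. Hence for `F ∈ M₁` and monomials `p, q`, `⟪q F, p F⟫ = ⟪q VF, p VF⟫`: the finite
measures `|F|² dμ` and `|VF|² dμ` (`μ` the volume on `Ω`), both carried by the compact set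
`closure Ω`, give the same integral to `p q̄`. Such products span the star algebra generated by
the coordinates, which separates points, so by Stone–Weierstrass the two measures coincide and
`|F| = |VF|` on `Ω`. For holomorphic `f, g` on a domain, `|f| = |g|` forces `f = c g`: on a ball
where `g ≠ 0` the quotient has constant modulus, hence is constant by the maximum modulus
principle, and the identity theorem spreads `f = c g` to `Ω`. Thus `F = c VF ∈ M₂`, and
symmetrically `M₂ ≤ M₁`.
-/

open MeasureTheory

noncomputable section

open Metric Set ComplexConjugate BoundedContinuousFunction Topology
open scoped ENNReal

/-- The Bergman space `L²_a(Ω)` of a domain `Ω ⊂ ℂ^n`: square-integrable (w.r.t. volume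
measure on `Ω`) holomorphic functions, realized as a subspace of `L²(Ω)`. -/
def Bergman (n : ℕ) (Ω : Set (Fin n → ℂ)) :
    Submodule ℂ (Lp ℂ 2 ((volume : Measure (Fin n → ℂ)).restrict Ω)) where
  carrier := {F | ∃ f : (Fin n → ℂ) → ℂ, DifferentiableOn ℂ f Ω ∧
    ⇑F =ᵐ[(volume : Measure (Fin n → ℂ)).restrict Ω] f}
  zero_mem' := ⟨fun _ => 0, differentiableOn_const 0, Lp.coeFn_zero ℂ 2 _⟩
  add_mem' := by
    rintro F G ⟨f, hf, hF⟩ ⟨g, hg, hG⟩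
    exact ⟨f + g, hf.add hg, (Lp.coeFn_add F G).trans (hF.add hG)⟩
  smul_mem' := by
    rintro c F ⟨f, hf, hF⟩
    exact ⟨c • f, hf.const_smul c, (Lp.coeFn_smul c F).trans (hF.const_smul c)⟩

theorem StarAlgebra.adjoin_le_span_mul_star {R A : Type*} [CommSemiring R] [StarRing R]
    [CommSemiring A] [Algebra R A] [StarRing A] [StarModule R A] (s : Set A) :
    Subalgebra.toSubmodule (StarAlgebra.adjoin R s).toSubalgebra ≤
      Submodule.span R
        (image2 (fun a b => a * star b) (Submonoid.closure s) (Submonoid.closure s)) := by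
  rw [StarAlgebra.adjoin_eq_span]
  refine Submodule.span_mono fun x hx => ?_
  induction hx using Submonoid.closure_induction with
  | mem x hx =>
    rcases hx with hx | hx
    · exact ⟨x, Submonoid.subset_closure hx, 1, one_mem _, by simp⟩
    · exact ⟨1, one_mem _, star x, Submonoid.subset_closure hx, by simp⟩
  | one => exact ⟨1, one_mem _, 1, one_mem _, by simp⟩
  | mul x y _ _ hx hy =>
    obtain ⟨a, ha, b, hb, rfl⟩ := hx
    obtain ⟨c, hc, d, hd, rfl⟩ := hy
    exact ⟨a * c, mul_mem ha hc, b * d, mul_mem hb hd, by simp only [star_mul]; ring⟩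

theorem MeasureTheory.Measure.ext_of_integral_mul_star_eq {Y : Type*} [MetricSpace Y]
    [CompactSpace Y] [MeasurableSpace Y] [BorelSpace Y] {s : Set (Y →ᵇ ℂ)}
    (hs : ∀ x y, x ≠ y → ∃ a ∈ s, a x ≠ a y) {ν₁ ν₂ : Measure Y} [IsFiniteMeasure ν₁]
    [IsFiniteMeasure ν₂]
    (h : ∀ m ∈ Submonoid.closure s, ∀ m' ∈ Submonoid.closure s,
      ∫ x, (m * star m') x ∂ν₁ = ∫ x, (m * star m') x ∂ν₂) :
    ν₁ = ν₂ := by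
  have hA : ((StarAlgebra.adjoin ℂ s).map (toContinuousMapStarₐ ℂ)).SeparatesPoints := by
    intro x y hxy
    obtain ⟨a, ha, hxy⟩ := hs x y hxy
    exact ⟨_, ⟨_, ⟨a, StarAlgebra.subset_adjoin ℂ s ha, rfl⟩, rfl⟩, hxy⟩
  refine ext_of_forall_mem_subalgebra_integral_eq_of_pseudoEMetric_complete_countable hA ?_
  intro a ha
  replace ha := StarAlgebra.adjoin_le_span_mul_star (R := ℂ) s ha
  induction ha using Submodule.span_induction with
  | mem a ha =>
    obtain ⟨m, hm, m', hm', rfl⟩ := ha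
    exact h m hm m' hm'
  | zero => simp
  | add a b _ _ ha hb =>
    simp only [BoundedContinuousFunction.coe_add, Pi.add_apply]
    rw [integral_add (a.integrable _) (b.integrable _),
      integral_add (a.integrable _) (b.integrable _), ha, hb]
  | smul c a _ ha =>
    simp only [BoundedContinuousFunction.coe_smul, smul_eq_mul]
    rw [integral_const_mul, integral_const_mul, ha]

theorem MeasureTheory.integral_comap_subtype_val_of_ae_mem {X E : Type*} [MeasurableSpace X]
    [NormedAddCommGroup E] [NormedSpace ℝ E] {K : Set X} (hK : MeasurableSet K) {ν : Measure X}
    (hν : ∀ᵐ x ∂ν, x ∈ K) (f : X → E) :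
    ∫ x : K, f x ∂ν.comap (↑) = ∫ x, f x ∂ν := by
  rw [integral_subtype_comap hK, Measure.restrict_eq_self_of_ae_mem hν]

theorem MeasureTheory.Measure.ext_of_integral_mul_conj_eq {X ι : Type*} [MetricSpace X]
    [MeasurableSpace X] [BorelSpace X] {K : Set X} (hK : IsCompact K) {u : ι → X → ℂ}
    (hu : ∀ i, ContinuousOn (u i) K) (hsep : ∀ x ∈ K, ∀ y ∈ K, x ≠ y → ∃ i, u i x ≠ u i y)
    {ν₁ ν₂ : Measure X} [IsFiniteMeasure ν₁] [IsFiniteMeasure ν₂]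
    (h₁ : ∀ᵐ x ∂ν₁, x ∈ K) (h₂ : ∀ᵐ x ∂ν₂, x ∈ K)
    (h : ∀ p ∈ Submonoid.closure (range u), ∀ q ∈ Submonoid.closure (range u),
      ∫ x, p x * conj (q x) ∂ν₁ = ∫ x, p x * conj (q x) ∂ν₂) :
    ν₁ = ν₂ := by
  have : CompactSpace K := isCompact_iff_compactSpace.mp hK
  have hKm : MeasurableSet K := hK.isClosed.measurableSet
  let uK : ι → (K →ᵇ ℂ) := fun i =>
    BoundedContinuousFunction.mkOfCompact ⟨K.domRestrict (u i), (hu i).domRestrict⟩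
  have restrict_mem : ∀ m ∈ Submonoid.closure (range uK),
      ∃ p ∈ Submonoid.closure (range u), ∀ x : K, m x = p x := by
    intro m hm
    induction hm using Submonoid.closure_induction with
    | mem m hm =>
      obtain ⟨i, rfl⟩ := hm
      exact ⟨u i, Submonoid.subset_closure (mem_range_self i), fun x => rfl⟩
    | one => exact ⟨1, one_mem _, fun x => rfl⟩
    | mul m m' _ _ hm hm' =>
      obtain ⟨p, hp, hpm⟩ := hm
      obtain ⟨p', hp', hpm'⟩ := hm'
      exact ⟨p * p', mul_mem hp hp', fun x => by simp [hpm x, hpm' x]⟩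
  have hcomap : ν₁.comap ((↑) : K → X) = ν₂.comap (↑) := by
    refine Measure.ext_of_integral_mul_star_eq (s := range uK)
      (fun x y hxy => ?_) fun m hm m' hm' => ?_
    · obtain ⟨i, hi⟩ := hsep x x.2 y y.2 (Subtype.coe_injective.ne hxy)
      exact ⟨uK i, mem_range_self i, hi⟩
    · obtain ⟨p, hp, hpm⟩ := restrict_mem m hm
      obtain ⟨q, hq, hqm⟩ := restrict_mem m' hm'
      have hpq : ∀ x : K, (m * star m') x = p x * conj (q x) := fun x => by simp [hpm x, hqm x]
      simp only [hpq]
      rw [integral_comap_subtype_val_of_ae_mem hKm h₁ (fun x => p x * conj (q x)),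
        integral_comap_subtype_val_of_ae_mem hKm h₂ (fun x => p x * conj (q x))]
      exact h p hp q hq
  rw [← Measure.restrict_eq_self_of_ae_mem h₁, ← Measure.restrict_eq_self_of_ae_mem h₂,
    ← map_comap_subtype_coe hKm, ← map_comap_subtype_coe hKm, hcomap]

namespace MeasureTheory.Lp

variable {X : Type*} [MeasurableSpace X] {μ : Measure X}

def MulInvariant (M : Submodule ℂ (Lp ℂ 2 μ)) (w : X → ℂ) : Prop :=
  ∀ F G : Lp ℂ 2 μ, F ∈ M → (⇑G =ᵐ[μ] fun x => w x * F x) → G ∈ M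

def Intertwines {M₁ M₂ : Submodule ℂ (Lp ℂ 2 μ)} (V : M₁ →ₗᵢ[ℂ] M₂) (w : X → ℂ) : Prop :=
  ∀ F F' : M₁, ∀ G' : M₂, (⇑(F' : Lp ℂ 2 μ) =ᵐ[μ] fun x => w x * (F : Lp ℂ 2 μ) x) →
    (⇑(G' : Lp ℂ 2 μ) =ᵐ[μ] fun x => w x * (V F : Lp ℂ 2 μ) x) → V F' = G'

theorem MulInvariant.exists_mem {M : Submodule ℂ (Lp ℂ 2 μ)} {w : X → ℂ} (hM : MulInvariant M w)
    (hw : MemLp w ∞ μ) (F : M) : ∃ F' : M, ⇑(F' : Lp ℂ 2 μ) =ᵐ[μ] fun x => w x * (F : Lp ℂ 2 μ) x :=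
  have hwF := (Lp.memLp (F : Lp ℂ 2 μ)).mul' hw
  ⟨⟨hwF.toLp _, hM _ _ F.2 hwF.coeFn_toLp⟩, hwF.coeFn_toLp⟩

theorem MulInvariant.one (M : Submodule ℂ (Lp ℂ 2 μ)) : MulInvariant M 1 := by
  intro F G hF hG
  convert hF
  exact Lp.ext (by simpa using hG)

theorem MulInvariant.mul {M : Submodule ℂ (Lp ℂ 2 μ)} {w₁ w₂ : X → ℂ} (h₁ : MulInvariant M w₁)
    (h₂ : MulInvariant M w₂) (hw₂ : MemLp w₂ ∞ μ) : MulInvariant M (w₁ * w₂) := by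
  intro F G hF hG
  obtain ⟨H, hH⟩ := h₂.exists_mem hw₂ ⟨F, hF⟩
  refine h₁ H G H.2 ?_
  filter_upwards [hG, hH] with x hGx hHx
  rw [hGx, hHx, Pi.mul_apply, mul_assoc]

variable {M₁ M₂ : Submodule ℂ (Lp ℂ 2 μ)}

theorem Intertwines.one (V : M₁ →ₗᵢ[ℂ] M₂) : Intertwines V 1 := by
  intro F F' G' hF' hG'
  have : F' = F := Subtype.ext (Lp.ext (by simpa using hF'))
  exact Subtype.ext (Lp.ext (by simpa [this] using hG'.symm))

theorem Intertwines.mul {V : M₁ →ₗᵢ[ℂ] M₂} {w₁ w₂ : X → ℂ} (h₁ : Intertwines V w₁)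
    (h₂ : Intertwines V w₂) (hM₁ : MulInvariant M₁ w₂) (hM₂ : MulInvariant M₂ w₂)
    (hw₂ : MemLp w₂ ∞ μ) : Intertwines V (w₁ * w₂) := by
  intro F F' G' hF' hG'
  obtain ⟨H, hH⟩ := hM₁.exists_mem hw₂ F
  obtain ⟨H', hH'⟩ := hM₂.exists_mem hw₂ (V F)
  have hVH : V H = H' := h₂ F H H' hH hH'
  refine h₁ H F' G' ?_ ?_
  · filter_upwards [hF', hH] with x hF'x hHx
    rw [hF'x, hHx, Pi.mul_apply, mul_assoc]
  · filter_upwards [hG', hH'] with x hG'x hH'x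
    rw [hG'x, hVH, hH'x, Pi.mul_apply, mul_assoc]

theorem Intertwines.symm {V : M₁ ≃ₗᵢ[ℂ] M₂} {w : X → ℂ} (h : Intertwines V.toLinearIsometry w) :
    Intertwines V.symm.toLinearIsometry w := by
  intro G G' F' hG' hF'
  rw [LinearIsometryEquiv.coe_toLinearIsometry, V.symm_apply_eq]
  exact (h _ F' G' hF' (by simpa using hG')).symm

/-- `MemLp w ∞ μ` makes `w * F` an element of `L²`; without it `MulInvariant M w` and
`Intertwines V w` can hold vacuously. -/
def intertwiningMultipliers (V : M₁ →ₗᵢ[ℂ] M₂) : Submonoid (X → ℂ) where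
  carrier := {w | MemLp w ∞ μ ∧ MulInvariant M₁ w ∧ MulInvariant M₂ w ∧ Intertwines V w}
  one_mem' := ⟨memLp_top_const 1, .one M₁, .one M₂, .one V⟩
  mul_mem' := fun ⟨hw₁, h₁M₁, h₁M₂, h₁V⟩ ⟨hw₂, h₂M₁, h₂M₂, h₂V⟩ =>
    ⟨hw₂.mul hw₁, h₁M₁.mul h₂M₁ hw₂, h₁M₂.mul h₂M₂ hw₂, h₁V.mul h₂V h₂M₁ h₂M₂ hw₂⟩

variable (μ) in
def normSqMeasure (F : Lp ℂ 2 μ) : Measure X :=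
  μ.withDensity fun x => ENNReal.ofReal (‖F x‖ ^ 2)

theorem integrable_norm_sq (F : Lp ℂ 2 μ) : Integrable (fun x => ‖F x‖ ^ 2) μ :=
  (memLp_two_iff_integrable_sq_norm (Lp.aestronglyMeasurable F)).mp (Lp.memLp F)

instance (F : Lp ℂ 2 μ) : IsFiniteMeasure (normSqMeasure μ F) :=
  isFiniteMeasure_withDensity_ofReal (integrable_norm_sq F).2

theorem integral_normSqMeasure (F : Lp ℂ 2 μ) (h : X → ℂ) :
    ∫ x, h x ∂normSqMeasure μ F = ∫ x, ‖F x‖ ^ 2 * h x ∂μ := by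
  rw [normSqMeasure, integral_withDensity_eq_integral_toReal_smul₀
    (integrable_norm_sq F).1.aemeasurable.ennreal_ofReal
    (.of_forall fun _ => ENNReal.ofReal_lt_top)]
  simp_rw [ENNReal.toReal_ofReal (sq_nonneg _), Complex.real_smul]
  norm_cast

theorem inner_eq_integral_normSqMeasure {F A B : Lp ℂ 2 μ} {w w' : X → ℂ}
    (hA : ⇑A =ᵐ[μ] fun x => w' x * F x) (hB : ⇑B =ᵐ[μ] fun x => w x * F x) :
    inner ℂ A B = ∫ x, w x * conj (w' x) ∂normSqMeasure μ F := by
  rw [L2.inner_def, integral_normSqMeasure]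
  refine integral_congr_ae ?_
  filter_upwards [hA, hB] with x hAx hBx
  rw [RCLike.inner_apply, hAx, hBx, map_mul, ← Complex.conj_mul']
  ring

theorem ae_norm_eq_of_normSqMeasure_eq {F G : Lp ℂ 2 μ}
    (h : normSqMeasure μ F = normSqMeasure μ G) : ∀ᵐ x ∂μ, ‖F x‖ = ‖G x‖ := by
  have hfin : ∫⁻ x, ENNReal.ofReal (‖F x‖ ^ 2) ∂μ ≠ ∞ := by
    simpa [normSqMeasure] using measure_ne_top (normSqMeasure μ F) univ
  rw [normSqMeasure, normSqMeasure, withDensity_eq_iff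
    (integrable_norm_sq F).1.aemeasurable.ennreal_ofReal
    (integrable_norm_sq G).1.aemeasurable.ennreal_ofReal hfin] at h
  filter_upwards [h] with x hx
  rw [ENNReal.ofReal_eq_ofReal_iff (sq_nonneg _) (sq_nonneg _)] at hx
  exact (pow_left_inj₀ (norm_nonneg _) (norm_nonneg _) two_ne_zero).mp hx

theorem integral_mul_conj_normSqMeasure_map {V : M₁ →ₗᵢ[ℂ] M₂} {w w' : X → ℂ}
    (hw : w ∈ intertwiningMultipliers V) (hw' : w' ∈ intertwiningMultipliers V) (F : M₁) :
    ∫ x, w x * conj (w' x) ∂normSqMeasure μ (F : Lp ℂ 2 μ) =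
      ∫ x, w x * conj (w' x) ∂normSqMeasure μ (V F : Lp ℂ 2 μ) := by
  obtain ⟨hwLp, hwM₁, hwM₂, hwV⟩ := hw
  obtain ⟨hw'Lp, hw'M₁, hw'M₂, hw'V⟩ := hw'
  obtain ⟨F₁, hF₁⟩ := hwM₁.exists_mem hwLp F
  obtain ⟨G₁, hG₁⟩ := hwM₂.exists_mem hwLp (V F)
  obtain ⟨F₂, hF₂⟩ := hw'M₁.exists_mem hw'Lp F
  obtain ⟨G₂, hG₂⟩ := hw'M₂.exists_mem hw'Lp (V F)
  rw [← inner_eq_integral_normSqMeasure hF₂ hF₁, ← inner_eq_integral_normSqMeasure hG₂ hG₁,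
    ← hwV F F₁ G₁ hF₁ hG₁, ← hw'V F F₂ G₂ hF₂ hG₂]
  exact (V.inner_map_map F₂ F₁).symm

theorem normSqMeasure_map_eq [MetricSpace X] [BorelSpace X] {ι : Type*} {K : Set X}
    (hK : IsCompact K) {u : ι → X → ℂ} (hu : ∀ i, ContinuousOn (u i) K)
    (hsep : ∀ x ∈ K, ∀ y ∈ K, x ≠ y → ∃ i, u i x ≠ u i y) (hμK : ∀ᵐ x ∂μ, x ∈ K)
    {V : M₁ →ₗᵢ[ℂ] M₂} (huV : ∀ i, u i ∈ intertwiningMultipliers V) (F : M₁) :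
    normSqMeasure μ (F : Lp ℂ 2 μ) = normSqMeasure μ (V F : Lp ℂ 2 μ) := by
  have hK' : ∀ G : Lp ℂ 2 μ, ∀ᵐ x ∂normSqMeasure μ G, x ∈ K := fun G =>
    withDensity_absolutelyContinuous _ _ hμK
  have hclosure : Submonoid.closure (range u) ≤ intertwiningMultipliers V :=
    Submonoid.closure_le.mpr (range_subset_iff.mpr huV)
  exact Measure.ext_of_integral_mul_conj_eq hK hu hsep (hK' _) (hK' _) fun p hp q hq =>
    integral_mul_conj_normSqMeasure_map (hclosure hp) (hclosure hq) F

end MeasureTheory.Lp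

section Holomorphic

variable {E F : Type*} [NormedAddCommGroup E] [NormedSpace ℂ E] [NormedAddCommGroup F]
  [NormedSpace ℂ F] [CompleteSpace F] {u : E → F} {U : Set E} {x : E}

theorem DifferentiableOn.eqOn_zero_of_convex_of_eventuallyEq_zero (hu : DifferentiableOn ℂ u U)
    (hUo : IsOpen U) (hUc : Convex ℝ U) (hx : x ∈ U) (hux : u =ᶠ[𝓝 x] 0) : EqOn u 0 U := by
  intro y hy
  let ℓ : ℂ → E := fun t => x + t • (y - x)
  have hℓ : Continuous ℓ := by fun_prop
  have hT : Convex ℝ (ℓ ⁻¹' U) := by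
    intro a ha b hb s t hs ht hst
    have : ℓ (s • a + t • b) = s • ℓ a + t • ℓ b := by
      simp only [ℓ, add_smul, smul_add, smul_assoc]
      linear_combination (norm := module) (-hst) • x
    rw [mem_preimage, this]
    exact hUc ha hb hs ht hst
  have hφ : AnalyticOnNhd ℂ (u ∘ ℓ) (ℓ ⁻¹' U) :=
    (hu.comp (by fun_prop) (mapsTo_preimage ℓ U)).analyticOnNhd (hUo.preimage hℓ)
  have hφ0 : u ∘ ℓ =ᶠ[𝓝 0] 0 := by
    have : Filter.Tendsto ℓ (𝓝 0) (𝓝 x) := by simpa [ℓ] using hℓ.tendsto 0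
    exact this.eventually hux
  simpa [ℓ] using hφ.eqOn_zero_of_preconnected_of_eventuallyEq_zero hT.isPreconnected
    (by simpa [ℓ] using hx) hφ0 (show (1 : ℂ) ∈ ℓ ⁻¹' U by simpa [ℓ] using hy)

theorem DifferentiableOn.eqOn_zero_of_isPreconnected_of_eventuallyEq_zero
    (hu : DifferentiableOn ℂ u U) (hUo : IsOpen U) (hUc : IsPreconnected U) (hx : x ∈ U)
    (hux : u =ᶠ[𝓝 x] 0) : EqOn u 0 U := by
  have hS : U ⊆ {z | u =ᶠ[𝓝 z] 0} := by
    refine hUc.subset_of_closure_inter_subset isOpen_setOfPred_eventually_nhds ⟨x, hx, hux⟩ ?_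
    rintro z ⟨hzS, hzU⟩
    obtain ⟨r, hr, hball⟩ := Metric.isOpen_iff.mp hUo z hzU
    obtain ⟨w, hwball, hwS⟩ := mem_closure_iff_nhds.mp hzS (ball z r) (ball_mem_nhds z hr)
    have := (hu.mono hball).eqOn_zero_of_convex_of_eventuallyEq_zero isOpen_ball (convex_ball z r)
      hwball hwS
    filter_upwards [ball_mem_nhds z hr] with y hy using this hy
  exact fun z hz => (hS hz).self_of_nhds


theorem exists_eqOn_const_smul_of_norm_eq {f g : E → ℂ} (hf : DifferentiableOn ℂ f U)
    (hg : DifferentiableOn ℂ g U) (hUo : IsOpen U) (hUc : IsPreconnected U)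
    (hfg : ∀ x ∈ U, ‖f x‖ = ‖g x‖) : ∃ c : ℂ, EqOn f (c • g) U := by
  by_cases hg0 : ∀ x ∈ U, g x = 0
  · exact ⟨0, fun x hx => by simpa [hg0 x hx] using hfg x hx⟩
  obtain ⟨x₀, hx₀, hgx₀⟩ := not_forall₂.mp hg0
  obtain ⟨r, hr, hball⟩ := Metric.mem_nhds_iff.mp <| Filter.inter_mem (hUo.mem_nhds hx₀)
    ((hg.continuousOn.continuousAt (hUo.mem_nhds hx₀)).eventually_ne hgx₀)
  have hballU : ball x₀ r ⊆ U := fun x hx => (hball hx).1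
  have hgne : ∀ x ∈ ball x₀ r, g x ≠ 0 := fun x hx => (hball hx).2
  have hq : DifferentiableOn ℂ (fun x => f x * (g x)⁻¹) (ball x₀ r) :=
    (hf.mono hballU).mul ((hg.mono hballU).inv hgne)
  have hq1 : ∀ x ∈ ball x₀ r, ‖f x * (g x)⁻¹‖ = 1 := fun x hx => by
    rw [norm_mul, norm_inv, hfg x (hballU hx), mul_inv_cancel₀ (norm_ne_zero_iff.mpr (hgne x hx))]
  have hqmax : IsMaxOn (norm ∘ fun x => f x * (g x)⁻¹) (ball x₀ r) x₀ := fun x hx =>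
    (hq1 x hx).trans (hq1 x₀ (mem_ball_self hr)).symm |>.le
  have hqc := Complex.eqOn_of_isPreconnected_of_isMaxOn_norm (convex_ball x₀ r).isPreconnected
    isOpen_ball hq (mem_ball_self hr) hqmax
  refine ⟨f x₀ * (g x₀)⁻¹, fun x hx => sub_eq_zero.mp ?_⟩
  refine (hf.sub (hg.const_smul (f x₀ * (g x₀)⁻¹))).eqOn_zero_of_isPreconnected_of_eventuallyEq_zero
    hUo hUc hx₀ ?_ hx
  filter_upwards [ball_mem_nhds x₀ hr] with y hy
  have := hqc hy
  simp only [Function.const_apply] at this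
  rw [Pi.sub_apply, Pi.smul_apply, ← this, smul_eq_mul, inv_mul_cancel_right₀ (hgne y hy), sub_self,
    Pi.zero_apply]

end Holomorphic

section Bergman

variable {n : ℕ} {Ω : Set (Fin n → ℂ)}

theorem memLp_top_coord (hΩ : MeasurableSet Ω) (hbdd : Bornology.IsBounded Ω) (i : Fin n) :
    MemLp (fun x : Fin n → ℂ => x i) ∞ (volume.restrict Ω) := by
  obtain ⟨R, hR⟩ := isBounded_iff_forall_norm_le.mp hbdd
  refine memLp_top_of_bound (continuous_apply i).aestronglyMeasurable R ?_
  filter_upwards [ae_restrict_mem hΩ] with x hx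
  exact (norm_le_pi_norm x i).trans (hR x hx)

theorem le_of_intertwines_coord (hopen : IsOpen Ω) (hconn : IsPreconnected Ω)
    (hbdd : Bornology.IsBounded Ω) {M₁ M₂ : Submodule ℂ (Lp ℂ 2 (volume.restrict Ω))}
    (hM₁a : M₁ ≤ Bergman n Ω) (hM₂a : M₂ ≤ Bergman n Ω)
    (hM₁inv : ∀ i : Fin n, Lp.MulInvariant M₁ fun x => x i)
    (hM₂inv : ∀ i : Fin n, Lp.MulInvariant M₂ fun x => x i)
    (V : M₁ →ₗᵢ[ℂ] M₂) (hV : ∀ i : Fin n, Lp.Intertwines V fun x => x i) : M₁ ≤ M₂ := by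
  intro F hF
  set G : M₂ := V ⟨F, hF⟩
  have hmeas : Lp.normSqMeasure _ F = Lp.normSqMeasure _ (G : Lp ℂ 2 (volume.restrict Ω)) :=
    Lp.normSqMeasure_map_eq hbdd.isCompact_closure (fun i => (continuous_apply i).continuousOn)
      (fun x _ y _ hxy => Function.ne_iff.mp hxy)
      ((ae_restrict_mem hopen.measurableSet).mono fun x hx => subset_closure hx)
      (fun i => ⟨memLp_top_coord hopen.measurableSet hbdd i, hM₁inv i, hM₂inv i, hV i⟩) ⟨F, hF⟩
  obtain ⟨f, hf, hFf⟩ := hM₁a hF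
  obtain ⟨g, hg, hGg⟩ := hM₂a G.2
  have hfg : ∀ x ∈ Ω, ‖f x‖ = ‖g x‖ := by
    refine Measure.eqOn_open_of_ae_eq (μ := volume) ?_ hopen hf.continuousOn.norm
      hg.continuousOn.norm
    filter_upwards [Lp.ae_norm_eq_of_normSqMeasure_eq hmeas, hFf, hGg] with x hx hFx hGx
    rwa [← hFx, ← hGx]
  obtain ⟨c, hc⟩ := exists_eqOn_const_smul_of_norm_eq hf hg hopen hconn hfg
  have hFG : F = c • (G : Lp ℂ 2 (volume.restrict Ω)) := by
    refine Lp.ext ?_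
    filter_upwards [hFf, hGg, Lp.coeFn_smul c (G : Lp ℂ 2 (volume.restrict Ω)),
      ae_restrict_mem hopen.measurableSet] with x hFx hGx hcGx hx
    rw [hFx, hcGx, Pi.smul_apply, hGx, hc hx, Pi.smul_apply]
  exact hFG ▸ M₂.smul_mem c G.2

end Bergman

theorem isometrically_isomorphic_submodules_of_bergman_are_equal_general
    (n : ℕ) (Ω : Set (Fin n → ℂ))
    (hopen : IsOpen Ω) (hconn : IsConnected Ω) (hbdd : Bornology.IsBounded Ω)
    (M₁ M₂ : Submodule ℂ (Lp ℂ 2 ((volume : Measure (Fin n → ℂ)).restrict Ω)))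
    (hM₁a : M₁ ≤ Bergman n Ω) (hM₂a : M₂ ≤ Bergman n Ω)
    (hM₁inv : ∀ i : Fin n, ∀ F G : Lp ℂ 2 ((volume : Measure (Fin n → ℂ)).restrict Ω),
      F ∈ M₁ → (⇑G =ᵐ[(volume : Measure (Fin n → ℂ)).restrict Ω] fun x => x i * F x) → G ∈ M₁)
    (hM₂inv : ∀ i : Fin n, ∀ F G : Lp ℂ 2 ((volume : Measure (Fin n → ℂ)).restrict Ω),
      F ∈ M₂ → (⇑G =ᵐ[(volume : Measure (Fin n → ℂ)).restrict Ω] fun x => x i * F x) → G ∈ M₂)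
    (V : M₁ ≃ₗᵢ[ℂ] M₂)
    (hV : ∀ i : Fin n, ∀ F F' : M₁, ∀ G' : M₂,
      (⇑(F' : Lp ℂ 2 ((volume : Measure (Fin n → ℂ)).restrict Ω))
        =ᵐ[(volume : Measure (Fin n → ℂ)).restrict Ω]
        fun x => x i * (F : Lp ℂ 2 ((volume : Measure (Fin n → ℂ)).restrict Ω)) x) →
      (⇑(G' : Lp ℂ 2 ((volume : Measure (Fin n → ℂ)).restrict Ω))
        =ᵐ[(volume : Measure (Fin n → ℂ)).restrict Ω]
        fun x => x i * ((V F : M₂) : Lp ℂ 2 ((volume : Measure (Fin n → ℂ)).restrict Ω)) x) →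
      V F' = G') :
    M₁ = M₂ :=
  le_antisymm
    (le_of_intertwines_coord hopen hconn.isPreconnected hbdd hM₁a hM₂a hM₁inv hM₂inv
      V.toLinearIsometry hV)
    (le_of_intertwines_coord hopen hconn.isPreconnected hbdd hM₂a hM₁a hM₂inv hM₁inv
      V.symm.toLinearIsometry fun i => Lp.Intertwines.symm (hV i))

/-- if `Ω` is a bounded domain in `ℂ^n` and `M₁`, `M₂` are closed subspaces of
the Bergman space `L²_a(Ω)` invariant under multiplication by the coordinate functions, and
there is a unitary `V : M₁ → M₂` commuting with these multiplications, then `M₁ = M₂`. -/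
theorem isometrically_isomorphic_submodules_of_bergman_are_equal
    (n : ℕ) (Ω : Set (Fin n → ℂ))
    (hopen : IsOpen Ω) (hconn : IsConnected Ω) (hbdd : Bornology.IsBounded Ω)
    (M₁ M₂ : Submodule ℂ (Lp ℂ 2 ((volume : Measure (Fin n → ℂ)).restrict Ω)))
    (hM₁closed : IsClosed (M₁ : Set (Lp ℂ 2 ((volume : Measure (Fin n → ℂ)).restrict Ω))))
    (hM₂closed : IsClosed (M₂ : Set (Lp ℂ 2 ((volume : Measure (Fin n → ℂ)).restrict Ω))))
    (hM₁a : M₁ ≤ Bergman n Ω) (hM₂a : M₂ ≤ Bergman n Ω)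
    (hM₁inv : ∀ i : Fin n, ∀ F G : Lp ℂ 2 ((volume : Measure (Fin n → ℂ)).restrict Ω),
      F ∈ M₁ → (⇑G =ᵐ[(volume : Measure (Fin n → ℂ)).restrict Ω] fun x => x i * F x) → G ∈ M₁)
    (hM₂inv : ∀ i : Fin n, ∀ F G : Lp ℂ 2 ((volume : Measure (Fin n → ℂ)).restrict Ω),
      F ∈ M₂ → (⇑G =ᵐ[(volume : Measure (Fin n → ℂ)).restrict Ω] fun x => x i * F x) → G ∈ M₂)
    (V : M₁ ≃ₗᵢ[ℂ] M₂)
    (hV : ∀ i : Fin n, ∀ F F' : M₁, ∀ G' : M₂,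
      (⇑(F' : Lp ℂ 2 ((volume : Measure (Fin n → ℂ)).restrict Ω))
        =ᵐ[(volume : Measure (Fin n → ℂ)).restrict Ω]
        fun x => x i * (F : Lp ℂ 2 ((volume : Measure (Fin n → ℂ)).restrict Ω)) x) →
      (⇑(G' : Lp ℂ 2 ((volume : Measure (Fin n → ℂ)).restrict Ω))
        =ᵐ[(volume : Measure (Fin n → ℂ)).restrict Ω]
        fun x => x i * ((V F : M₂) : Lp ℂ 2 ((volume : Measure (Fin n → ℂ)).restrict Ω)) x) →
      V F' = G') :
    M₁ = M₂ :=
  isometrically_isomorphic_submodules_of_bergman_are_equal_general n Ω hopen hconn hbdd M₁ M₂ hM₁a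
    hM₂a hM₁inv hM₂inv V hV
end
end

section
/- Let W be a unitary operator on a Hilbert space K such that W has no finite-dimensional reducing subspaces, and let X be a compact operator on K commuting with W. Then X = 0. -/
open ContinuousLinearMap

section Aux

open Filter Metric

/-- Auxiliary: a compact operator `T` on a Hilbert space of the form `X† X` with `X ≠ 0`
has an eigenvector with eigenvalue `‖X‖ ^ 2`. -/
theorem aux_exists_eigenvector (K : Type*) [NormedAddCommGroup K] [InnerProductSpace ℂ K]
    [CompleteSpace K] (X : K →L[ℂ] K) (hXc : IsCompactOperator X) (hX0 : X ≠ 0) :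
    ∃ v : K, v ≠ 0 ∧ (adjoint X ∘L X) v = ((‖X‖ ^ 2 : ℝ) : ℂ) • v := by
  set T : K →L[ℂ] K := adjoint X ∘L X with hTdef
  have hXnorm : 0 < ‖X‖ := norm_pos_iff.mpr hX0
  set lam : ℝ := ‖X‖ ^ 2 with hlamdef
  have hlampos : 0 < lam := by positivity
  set μ : ℂ := (lam : ℂ) with hμdef
  have hμ0 : μ ≠ 0 := by
    simp [hμdef, Complex.ofReal_eq_zero]
    exact hlampos.ne'
  have hTnorm : ‖T‖ = lam := by
    rw [hTdef, norm_adjoint_comp_self, hlamdef, sq]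
  -- the maximizing sequence
  have hseq : ∀ n : ℕ, ∃ x : K, ‖x‖ ≤ 1 ∧
      (max 0 (‖X‖ - 1 / (n + 1))) ^ 2 ≤ ‖X x‖ ^ 2 := by
    intro n
    have h1 : (0 : ℝ) < 1 / ((n : ℝ) + 1) := by positivity
    have hc : max 0 (‖X‖ - 1 / (n + 1)) < ‖X‖ := max_lt hXnorm (by linarith)
    obtain ⟨x, hx1, hx2⟩ := X.exists_lt_apply_of_lt_opNorm hc
    refine ⟨x, hx1.le, ?_⟩
    have h0 : (0 : ℝ) ≤ max 0 (‖X‖ - 1 / (n + 1)) := le_max_left _ _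
    nlinarith
  choose x hx1 hx2 using hseq
  -- the norms ‖X xₙ‖² tend to lam
  have hc_tendsto : Tendsto (fun n : ℕ => (max 0 (‖X‖ - 1 / (n + 1))) ^ 2) atTop (nhds lam) := by
    have h1 : Tendsto (fun n : ℕ => ‖X‖ - 1 / ((n : ℝ) + 1)) atTop (nhds (‖X‖ - 0)) :=
      tendsto_const_nhds.sub tendsto_one_div_add_atTop_nhds_zero_nat
    have h2 : Tendsto (fun n : ℕ => max 0 (‖X‖ - 1 / ((n : ℝ) + 1))) atTop
        (nhds (max 0 (‖X‖ - 0))) := tendsto_const_nhds.max h1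
    have h3 : max 0 (‖X‖ - 0) = ‖X‖ := by
      rw [sub_zero]; exact max_eq_right hXnorm.le
    rw [h3] at h2
    simpa [hlamdef] using h2.pow 2
  have hXx_le : ∀ n, ‖X (x n)‖ ^ 2 ≤ lam := by
    intro n
    have h1 : ‖X (x n)‖ ≤ ‖X‖ * ‖x n‖ := X.le_opNorm _
    have h2 : ‖X (x n)‖ ≤ ‖X‖ := by
      calc ‖X (x n)‖ ≤ ‖X‖ * ‖x n‖ := h1
        _ ≤ ‖X‖ * 1 := by nlinarith [hx1 n, norm_nonneg (X (x n))]
        _ = ‖X‖ := mul_one _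
    rw [hlamdef]
    nlinarith [norm_nonneg (X (x n))]
  have ha : Tendsto (fun n => ‖X (x n)‖ ^ 2) atTop (nhds lam) :=
    tendsto_of_tendsto_of_tendsto_of_le_of_le hc_tendsto tendsto_const_nhds hx2 hXx_le
  -- re ⟪T z, z⟫ = ‖X z‖ ^ 2
  have hre : ∀ z : K, RCLike.re (inner ℂ (T z) z : ℂ) = ‖X z‖ ^ 2 := by
    intro z
    have : (inner ℂ (T z) z : ℂ) = inner ℂ (X z) (X z) := by
      rw [hTdef]
      exact adjoint_inner_left X z (X z)
    rw [this, inner_self_eq_norm_sq]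
  -- ‖T xₙ - μ • xₙ‖ tends to 0
  have hkey : ∀ n, ‖T (x n) - μ • x n‖ ^ 2 ≤ 2 * lam ^ 2 - 2 * lam * ‖X (x n)‖ ^ 2 := by
    intro n
    have hexp := @norm_sub_sq ℂ _ _ _ _ (T (x n)) (μ • x n)
    have h1 : RCLike.re (inner ℂ (T (x n)) (μ • x n) : ℂ) = lam * ‖X (x n)‖ ^ 2 := by
      rw [inner_smul_right]
      have : RCLike.re (μ * (inner ℂ (T (x n)) (x n) : ℂ))
          = lam * RCLike.re (inner ℂ (T (x n)) (x n) : ℂ) := by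
        simp [hμdef]
      rw [this, hre]
    have hxsq : ‖x n‖ ^ 2 ≤ 1 := by nlinarith [hx1 n, norm_nonneg (x n)]
    have h2 : ‖μ • x n‖ ^ 2 ≤ lam ^ 2 := by
      rw [norm_smul]
      have hμn : ‖μ‖ = lam := by
        simp [hμdef, abs_of_pos hlampos]
      rw [hμn, mul_pow]
      nlinarith [hxsq, sq_nonneg lam]
    have h3 : ‖T (x n)‖ ^ 2 ≤ lam ^ 2 := by
      have h5 := T.le_opNorm (x n)
      rw [hTnorm] at h5
      have h6 : ‖T (x n)‖ ≤ lam := by nlinarith [hx1 n, norm_nonneg (T (x n)), norm_nonneg (x n), hlampos]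
      nlinarith [norm_nonneg (T (x n))]
    have h4 : ‖X (x n)‖ ^ 2 ≤ lam := hXx_le n
    rw [hexp, h1]
    nlinarith
  have hb_tendsto : Tendsto (fun n => 2 * lam ^ 2 - 2 * lam * ‖X (x n)‖ ^ 2) atTop (nhds 0) := by
    have h := (tendsto_const_nhds :
        Tendsto (fun _ : ℕ => 2 * lam ^ 2) atTop (nhds (2 * lam ^ 2))).sub
      (ha.const_mul (2 * lam))
    have h0 : 2 * lam ^ 2 - 2 * lam * lam = 0 := by ring
    rw [h0] at h
    exact h
  have hdiff0 : Tendsto (fun n => T (x n) - μ • x n) atTop (nhds 0) := by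
    rw [tendsto_zero_iff_norm_tendsto_zero]
    have hub : ∀ n, ‖T (x n) - μ • x n‖ ≤ Real.sqrt (2 * lam ^ 2 - 2 * lam * ‖X (x n)‖ ^ 2) := by
      intro n
      have h0 : (0:ℝ) ≤ 2 * lam ^ 2 - 2 * lam * ‖X (x n)‖ ^ 2 :=
        (sq_nonneg _).trans (hkey n)
      exact (Real.le_sqrt (norm_nonneg _) h0).mpr (hkey n)
    have hsq : Tendsto (fun n => Real.sqrt (2 * lam ^ 2 - 2 * lam * ‖X (x n)‖ ^ 2)) atTop
        (nhds 0) := by simpa using hb_tendsto.sqrt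
    exact tendsto_of_tendsto_of_tendsto_of_le_of_le tendsto_const_nhds hsq
      (fun n => norm_nonneg _) hub
  -- compactness: extract convergent subsequence of T xₙ
  have hTc : IsCompactOperator ((T : K →ₗ[ℂ] K) : K → K) := by
    have := hXc.clm_comp (adjoint X)
    exact this
  obtain ⟨C, hC, hCsub⟩ := hTc.image_closedBall_subset_compact 1
  have hmem : ∀ n, T (x n) ∈ C := by
    intro n
    exact hCsub ⟨x n, mem_closedBall_zero_iff.mpr (hx1 n), rfl⟩
  obtain ⟨y, hyC, φ, hφ, hy⟩ := hC.tendsto_subseq hmem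
  have hy' : Tendsto (fun n => T (x (φ n))) atTop (nhds y) := hy
  have hdiff0' : Tendsto (fun n => T (x (φ n)) - μ • x (φ n)) atTop (nhds 0) :=
    hdiff0.comp hφ.tendsto_atTop
  have hμx : Tendsto (fun n => μ • x (φ n)) atTop (nhds y) := by
    have := hy'.sub hdiff0'
    simpa using this
  set v : K := μ⁻¹ • y with hvdef
  have hxv : Tendsto (fun n => x (φ n)) atTop (nhds v) := by
    have := hμx.const_smul μ⁻¹
    simpa [hvdef, smul_smul, inv_mul_cancel₀ hμ0] using this
  have hTv : T v = y :=
    tendsto_nhds_unique ((T.continuous.tendsto v).comp hxv) hy'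
  have hy_eq : y = μ • v := by
    rw [hvdef, smul_smul, mul_inv_cancel₀ hμ0, one_smul]
  -- y ≠ 0
  have hynorm : lam ≤ ‖y‖ := by
    have hlow : ∀ n, ‖X (x n)‖ ^ 2 ≤ ‖T (x n)‖ := by
      intro n
      have h1 : RCLike.re (inner ℂ (T (x n)) (x n) : ℂ) ≤ ‖(inner ℂ (T (x n)) (x n) : ℂ)‖ :=
        RCLike.re_le_norm _
      have h2 : ‖(inner ℂ (T (x n)) (x n) : ℂ)‖ ≤ ‖T (x n)‖ * ‖x n‖ := norm_inner_le_norm _ _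
      have h3 : ‖T (x n)‖ * ‖x n‖ ≤ ‖T (x n)‖ := by
        nlinarith [hx1 n, norm_nonneg (T (x n)), norm_nonneg (x n)]
      have := hre (x n)
      linarith
    have h1 : Tendsto (fun n => ‖X (x (φ n))‖ ^ 2) atTop (nhds lam) :=
      ha.comp hφ.tendsto_atTop
    have h2 : Tendsto (fun n => ‖T (x (φ n))‖) atTop (nhds ‖y‖) :=
      (continuous_norm.tendsto y).comp hy'
    exact le_of_tendsto_of_tendsto' h1 h2 fun n => hlow (φ n)
  have hvne : v ≠ 0 := by
    intro h
    rw [h, smul_zero] at hy_eq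
    rw [hy_eq, norm_zero] at hynorm
    linarith
  exact ⟨v, hvne, by rw [hTv, hy_eq]⟩

end Aux

/-- simplified form, as in the final claim: if `W` is a unitary operator on a
Hilbert space `K` having no nonzero finite-dimensional reducing subspaces (as is the case when its
spectral measure is absolutely continuous), and `X` is a compact operator on `K` commuting with
`W`, then `X = 0`. -/
theorem compact_commuting_with_unitary_without_fin_dim_reducing_eq_zero
    (K : Type*) [NormedAddCommGroup K] [InnerProductSpace ℂ K] [CompleteSpace K]
    (W : K →L[ℂ] K) (hW : W ∈ unitary (K →L[ℂ] K))
    (hred : ∀ S : Submodule ℂ K,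
      (∀ x ∈ S, W x ∈ S) → (∀ x ∈ S, ContinuousLinearMap.adjoint W x ∈ S) →
      FiniteDimensional ℂ S → S = ⊥)
    (X : K →L[ℂ] K) (hXc : IsCompactOperator X) (hcomm : W ∘L X = X ∘L W) :
    X = 0 := by
  by_contra hX0
  set W' : K →L[ℂ] K := adjoint W with hW'def
  have hW1 : W' * W = 1 := by
    have h := hW.1
    rwa [star_eq_adjoint, ← hW'def] at h
  have hW2 : W * W' = 1 := by
    have h := hW.2
    rwa [star_eq_adjoint, ← hW'def] at h
  have hcommm : W * X = X * W := by rw [mul_def, mul_def]; exact hcomm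
  -- X commutes with W'
  have hc1 : X * W' = W' * X := by
    calc X * W' = (W' * W) * (X * W') := by rw [hW1, one_mul]
      _ = W' * (W * X) * W' := by rw [← mul_assoc, ← mul_assoc]
      _ = W' * (X * W) * W' := by rw [hcommm]
      _ = (W' * X) * (W * W') := by rw [mul_assoc, mul_assoc, mul_assoc]
      _ = W' * X := by rw [hW2, mul_one]
  -- adjoint X commutes with W and W'
  have hadj : ∀ f g : K →L[ℂ] K, adjoint (f * g) = adjoint g * adjoint f := by
    intro f g
    rw [mul_def, mul_def, adjoint_comp]
  have hc2 : adjoint X * W = W * adjoint X := by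
    have h := congrArg adjoint hc1
    rw [hadj, hadj, hW'def, adjoint_adjoint] at h
    exact h.symm
  have hc3 : adjoint X * W' = W' * adjoint X := by
    have h := congrArg adjoint hcommm
    rw [hadj, hadj, ← hW'def] at h
    exact h
  set T : K →L[ℂ] K := adjoint X * X with hTdef
  have hTW : T * W = W * T := by
    calc T * W = adjoint X * (X * W) := by rw [hTdef, mul_assoc]
      _ = adjoint X * (W * X) := by rw [hcommm]
      _ = (adjoint X * W) * X := by rw [mul_assoc]
      _ = (W * adjoint X) * X := by rw [hc2]
      _ = W * T := by rw [hTdef, mul_assoc]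
  have hTW' : T * W' = W' * T := by
    calc T * W' = adjoint X * (X * W') := by rw [hTdef, mul_assoc]
      _ = adjoint X * (W' * X) := by rw [hc1]
      _ = (adjoint X * W') * X := by rw [mul_assoc]
      _ = (W' * adjoint X) * X := by rw [hc3]
      _ = W' * T := by rw [hTdef, mul_assoc]
  -- eigenvector of T
  obtain ⟨v, hvne, hvT⟩ := aux_exists_eigenvector K X hXc hX0
  set μ : ℂ := ((‖X‖ ^ 2 : ℝ) : ℂ) with hμdef
  have hμ0 : μ ≠ 0 := by
    have : ‖X‖ ≠ 0 := norm_ne_zero_iff.mpr hX0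
    simp [hμdef, Complex.ofReal_eq_zero]
    positivity
  -- the eigenspace
  set A : K →L[ℂ] K := T - μ • (1 : K →L[ℂ] K) with hAdef
  set S : Submodule ℂ K := LinearMap.ker (A : K →ₗ[ℂ] K) with hSdef
  have hSmem : ∀ z : K, z ∈ S ↔ T z = μ • z := by
    intro z
    rw [hSdef, LinearMap.mem_ker]
    constructor
    · intro h
      rw [hAdef] at h
      simp only [coe_coe, sub_apply, smul_apply, one_apply] at h
      exact sub_eq_zero.mp h
    · intro h
      rw [hAdef]
      simp only [coe_coe, sub_apply, smul_apply, one_apply, one_apply_eq_self, h, sub_self]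
  have hvS : v ∈ S := by
    rw [hSmem]
    have : T v = (adjoint X ∘L X) v := by rw [hTdef, mul_def]
    rw [this, hvT, hμdef]
  -- S is invariant under W and W'
  have happly : ∀ (f g : K →L[ℂ] K) (z : K), (f * g) z = f (g z) := fun f g z => rfl
  have hWinv : ∀ z ∈ S, W z ∈ S := by
    intro z hz
    rw [hSmem] at hz ⊢
    calc T (W z) = (T * W) z := rfl
      _ = (W * T) z := by rw [hTW]
      _ = W (T z) := rfl
      _ = μ • W z := by rw [hz, map_smul]
  have hW'inv : ∀ z ∈ S, W' z ∈ S := by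
    intro z hz
    rw [hSmem] at hz ⊢
    calc T (W' z) = (T * W') z := rfl
      _ = (W' * T) z := by rw [hTW']
      _ = W' (T z) := rfl
      _ = μ • W' z := by rw [hz, map_smul]
  -- S is finite dimensional
  have hSclosed : IsClosed (S : Set K) := ContinuousLinearMap.isClosed_ker A
  haveI : CompleteSpace S := hSclosed.completeSpace_coe
  have hTS : ∀ z ∈ S, (T : K →ₗ[ℂ] K) z ∈ S := by
    intro z hz
    have hz' := (hSmem z).mp hz
    show T z ∈ S
    rw [hz']
    exact S.smul_mem μ hz
  have hTcoe : IsCompactOperator ((T : K →ₗ[ℂ] K) : K → K) := by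
    have h : IsCompactOperator (⇑(adjoint X) ∘ ⇑X) := hXc.clm_comp (adjoint X)
    exact h
  have hres : IsCompactOperator ((T : K →ₗ[ℂ] K).restrict hTS) :=
    hTcoe.restrict' hTS
  have hid : IsCompactOperator (id : S → S) := by
    have h := hres.smul μ⁻¹
    have heq : (μ⁻¹ • ⇑((T : K →ₗ[ℂ] K).restrict hTS)) = (id : S → S) := by
      funext z
      have hz' := (hSmem (z : K)).mp z.2
      apply Subtype.ext
      show μ⁻¹ • ((T : K →ₗ[ℂ] K).restrict hTS z : K) = (z : K)
      have : ((T : K →ₗ[ℂ] K).restrict hTS z : K) = T (z : K) := rfl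
      rw [this, hz', smul_smul, inv_mul_cancel₀ hμ0, one_smul]
    rwa [heq] at h
  obtain ⟨C, hC, hC0⟩ := hid
  have hC0' : C ∈ nhds (0 : S) := by simpa using hC0
  haveI : LocallyCompactSpace S := hC.locallyCompactSpace_of_mem_nhds_of_addGroup hC0'
  haveI : FiniteDimensional ℂ S := FiniteDimensional.of_locallyCompactSpace ℂ
  -- conclude
  have hbot := hred S hWinv hW'inv inferInstance
  rw [hbot] at hvS
  exact hvne (Submodule.mem_bot ℂ |>.mp hvS)
end
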